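/- arXiv:2504.19910 — 4 statements merged into one kernel-verified Lean document; each statement's English description precedes it below -/
import Mathlib

section
/- Let X be a type and l a filter on X. Let S be the set of functions f : X → ℝ that are eventually nonzero along l and tend to 0 along l. Define a relation on S by f ≈ g if and only if the function (f − g)/g² tends to 0 along l. Then ≈ is an equivalence relation on S: it is reflexive, symmetric, and transitive. -/
/-!
Since `g → 0`, the relation `(f - g) / g² → 0` forces `f / g → 1`. That ratio converts
`(f - g) / g²` into `(g - f) / f²` (symmetry), and `(f - g) / g²` into a contribution to
`(f - h) / h²` (transitivity), with the factor `(g / f)²` or `(g / h)²` tending to `1`.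
-/

open Filter Topology

section GaugeRel

variable {X 𝕜 : Type*} [NormedField 𝕜] {l : Filter X} {f g h : X → 𝕜}

def GaugeRel (l : Filter X) (f g : X → 𝕜) : Prop :=
  Tendsto (fun x => (f x - g x) / g x ^ 2) l (𝓝 0)

theorem gaugeRel_refl (l : Filter X) (f : X → 𝕜) : GaugeRel l f f := by
  simpa only [GaugeRel, sub_self, zero_div] using tendsto_const_nhds

theorem GaugeRel.tendsto_div_nhds_one (hfg : GaugeRel l f g) (hg0 : ∀ᶠ x in l, g x ≠ 0)
    (hg : Tendsto g l (𝓝 0)) : Tendsto (fun x => f x / g x) l (𝓝 1) := by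
  have hlim : Tendsto (fun x => 1 + (f x - g x) / g x ^ 2 * g x) l (𝓝 1) := by
    simpa using (hfg.mul hg).const_add 1
  refine hlim.congr' ?_
  filter_upwards [hg0] with x hx
  field_simp
  ring

theorem GaugeRel.symm (hfg : GaugeRel l f g) (hg0 : ∀ᶠ x in l, g x ≠ 0)
    (hg : Tendsto g l (𝓝 0)) : GaugeRel l g f := by
  have hgf : Tendsto (fun x => g x / f x) l (𝓝 1) := by
    simpa using (hfg.tendsto_div_nhds_one hg0 hg).inv₀ one_ne_zero
  have hlim : Tendsto (fun x => -((f x - g x) / g x ^ 2) * (g x / f x) ^ 2) l (𝓝 0) := by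
    simpa using hfg.neg.mul (hgf.pow 2)
  refine hlim.congr' ?_
  filter_upwards [hg0] with x hx
  -- where `f x = 0` both sides are junk `0`s of division by zero
  by_cases hfx : f x = 0
  · simp [hfx]
  · field_simp
    ring

theorem GaugeRel.trans (hfg : GaugeRel l f g) (hgh : GaugeRel l g h)
    (hg0 : ∀ᶠ x in l, g x ≠ 0) (hh0 : ∀ᶠ x in l, h x ≠ 0) (hh : Tendsto h l (𝓝 0)) :
    GaugeRel l f h := by
  have hlim : Tendsto (fun x => (f x - g x) / g x ^ 2 * (g x / h x) ^ 2 +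
      (g x - h x) / h x ^ 2) l (𝓝 0) := by
    simpa using (hfg.mul ((hgh.tendsto_div_nhds_one hh0 hh).pow 2)).add hgh
  refine hlim.congr' ?_
  filter_upwards [hg0, hh0] with x hgx hhx
  field_simp
  ring

end GaugeRel

/-- The gauge-equivalence relation between completion functions (modeled as
functions `X → ℝ` that are eventually nonzero and tend to `0` along a filter `l`):
`f ≈ g` iff `(f - g)/g²` tends to `0` along `l`. This relation is reflexive,
symmetric and transitive on that set. -/
theorem gauge_equivalence_is_equivalence {X : Type*} (l : Filter X) :
    let S : Set (X → ℝ) :=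
      {f | (∀ᶠ x in l, f x ≠ 0) ∧ Tendsto f l (𝓝 0)}
    let r : (X → ℝ) → (X → ℝ) → Prop := fun f g =>
      Tendsto (fun x => (f x - g x) / (g x) ^ 2) l (𝓝 0)
    (∀ f ∈ S, r f f) ∧
      (∀ f ∈ S, ∀ g ∈ S, r f g → r g f) ∧
      (∀ f ∈ S, ∀ g ∈ S, ∀ h ∈ S, r f g → r g h → r f h) := by
  refine ⟨fun f _ => gaugeRel_refl l f, ?_, ?_⟩
  · rintro f - g ⟨hg0, hg⟩ hfg
    exact GaugeRel.symm hfg hg0 hg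
  · rintro f - g ⟨hg0, -⟩ h ⟨hh0, hh⟩ hfg hgh
    exact GaugeRel.trans hfg hgh hg0 hh0 hh
end

section
/- Let a ∈ (0, 1) and let Θ, Θ' : (0, a) → ℝ each converge to a finite limit as x → 0⁺. Define ω(x) := Θ(x)·log x and ω'(x) := Θ'(x)·log x. Set X₁(x) := (1 + ω(x)·x)·x, x₁''(x) := (1 + ω'(x)·X₁(x))·X₁(x), and with the roles of ω and ω' exchanged set X₂(x) := (1 + ω'(x)·x)·x, x₂''(x) := (1 + ω(x)·X₂(x))·X₂(x). Then as x → 0⁺: (i) x₁''(x)/x → 1, so in particular x₁''(x) is eventually nonzero; and (ii) (x₂''(x) − x₁''(x))/x₁''(x)² → 0. -/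
open Filter Topology

/-- Physically admissible supertranslations commute asymptotically: if
`ω = Θ·log` and `ω' = Θ'·log` with `Θ, Θ'` admitting finite limits as
`x → 0⁺`, and the two orders of composition give `x₁''` and `x₂''`, then
`x₁''/x → 1` (so `x₁''` is eventually nonzero) and
`(x₂'' − x₁'')/x₁''² → 0` as `x → 0⁺`. -/
theorem supertranslations_commute_asymptotically (a : ℝ)
    (ha : a ∈ Set.Ioo (0:ℝ) 1) (Θ Θ' : ℝ → ℝ) (c c' : ℝ)
    (hΘ : Tendsto Θ (𝓝[>] (0:ℝ)) (𝓝 c))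
    (hΘ' : Tendsto Θ' (𝓝[>] (0:ℝ)) (𝓝 c')) :
    let ω : ℝ → ℝ := fun x => Θ x * Real.log x
    let ω' : ℝ → ℝ := fun x => Θ' x * Real.log x
    let X₁ : ℝ → ℝ := fun x => (1 + ω x * x) * x
    let x₁'' : ℝ → ℝ := fun x => (1 + ω' x * X₁ x) * X₁ x
    let X₂ : ℝ → ℝ := fun x => (1 + ω' x * x) * x
    let x₂'' : ℝ → ℝ := fun x => (1 + ω x * X₂ x) * X₂ x
    Tendsto (fun x => x₁'' x / x) (𝓝[>] (0:ℝ)) (𝓝 1) ∧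
      (∀ᶠ x in 𝓝[>] (0:ℝ), x₁'' x ≠ 0) ∧
      Tendsto (fun x => (x₂'' x - x₁'' x) / (x₁'' x) ^ 2) (𝓝[>] (0:ℝ)) (𝓝 0) := by
  intro ω ω' X₁ x₁'' X₂ x₂''
  have hx_pos : ∀ᶠ x in 𝓝[>] (0:ℝ), 0 < x := self_mem_nhdsWithin
  have hlog : Tendsto (fun x => Real.log x * x) (𝓝[>] (0:ℝ)) (𝓝 0) := by
    have := tendsto_log_mul_rpow_nhdsGT_zero (r := 1) one_pos
    simpa [Real.rpow_one] using this
  have hωx : Tendsto (fun x => ω x * x) (𝓝[>] (0:ℝ)) (𝓝 0) := by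
    have h := hΘ.mul hlog
    rw [mul_zero] at h
    exact h.congr (fun x => by simp only [ω]; ring)
  have hA : Tendsto (fun x => 1 + ω x * x) (𝓝[>] (0:ℝ)) (𝓝 1) := by
    simpa using (tendsto_const_nhds (x := (1:ℝ))).add hωx
  have hX₁x : Tendsto (fun x => X₁ x / x) (𝓝[>] (0:ℝ)) (𝓝 1) := by
    refine hA.congr' ?_
    filter_upwards [hx_pos] with x hx
    simp only [X₁]
    rw [mul_div_cancel_right₀ _ hx.ne']
  have hω'X₁ : Tendsto (fun x => ω' x * X₁ x) (𝓝[>] (0:ℝ)) (𝓝 0) := by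
    have h := (hΘ'.mul hlog).mul hA
    rw [mul_zero, zero_mul] at h
    exact h.congr (fun x => by simp only [ω', X₁, ω]; ring)
  have h1 : Tendsto (fun x => x₁'' x / x) (𝓝[>] (0:ℝ)) (𝓝 1) := by
    have h := ((tendsto_const_nhds (x := (1:ℝ))).add hω'X₁).mul hX₁x
    rw [add_zero, one_mul] at h
    exact h.congr (fun x => (mul_div_assoc (1 + ω' x * X₁ x) (X₁ x) x).symm)
  have h2 : ∀ᶠ x in 𝓝[>] (0:ℝ), x₁'' x ≠ 0 := by
    filter_upwards [h1.eventually_ne one_ne_zero] with x hx h0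
    exact hx (by simp [h0])
  refine ⟨h1, h2, ?_⟩
  have hM : Tendsto (fun x => (Real.log x) ^ 3 * x ^ 2) (𝓝[>] (0:ℝ)) (𝓝 0) := by
    have h := (tendsto_log_mul_rpow_nhdsGT_zero (r := 2/3) (by norm_num)).pow 3
    rw [show ((0:ℝ) ^ 3) = 0 by norm_num] at h
    refine h.congr' ?_
    filter_upwards [hx_pos] with x hx
    rw [mul_pow, ← Real.rpow_natCast (x ^ ((2:ℝ)/3)) 3, ← Real.rpow_mul hx.le,
      show ((2:ℝ)/3 * (3:ℕ)) = ((2:ℕ):ℝ) by norm_num, Real.rpow_natCast]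
  have hG : Tendsto (fun x => ω x * ω' x * (ω' x - ω x) * x ^ 2) (𝓝[>] (0:ℝ)) (𝓝 0) := by
    have h := ((hΘ.mul hΘ').mul (hΘ'.sub hΘ)).mul hM
    rw [mul_zero] at h
    exact h.congr (fun x => by simp only [ω, ω']; ring)
  have hinv : Tendsto (fun x => x / x₁'' x) (𝓝[>] (0:ℝ)) (𝓝 1) := by
    have h := h1.inv₀ one_ne_zero
    rw [inv_one] at h
    exact h.congr (fun x => by rw [inv_div])
  have key : ∀ x, (x₂'' x - x₁'' x) / (x₁'' x) ^ 2
      = (ω x * ω' x * (ω' x - ω x) * x ^ 2) * (x / x₁'' x) ^ 2 := by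
    intro x
    have hnum : x₂'' x - x₁'' x = (ω x * ω' x * (ω' x - ω x) * x ^ 2) * x ^ 2 := by
      simp only [x₂'', x₁'', X₂, X₁]; ring
    rw [hnum, div_pow, mul_div_assoc]
  have h := hG.mul (hinv.pow 2)
  rw [zero_mul] at h
  exact h.congr (fun x => (key x).symm)
end

section
/- There exist differentiable functions ω, ω' : (0, 1) → ℝ such that x·ω(x) → 0, x²·(dω/dx)(x) → 0, x·ω'(x) → 0 and x²·(dω'/dx)(x) → 0 as x → 0⁺, and yet x²·ω(x)·ω'(x)·(ω'(x) − ω(x)) does not tend to 0 as x → 0⁺. For example ω(x) = x^{−2/3} and ω'(x) = 2·x^{−2/3} work, for which x²·ω·ω'·(ω' − ω) is identically 2. -/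
open Filter Topology

private lemma cube_root_tendsto : Tendsto (fun x : ℝ => x ^ ((1:ℝ)/3)) (𝓝[>] (0:ℝ)) (𝓝 0) := by
  have h : ContinuousAt (fun x : ℝ => x ^ ((1:ℝ)/3)) 0 :=
    Real.continuousAt_rpow_const 0 (1/3) (Or.inr (by norm_num))
  have := h.tendsto
  rw [show (0:ℝ) ^ ((1:ℝ)/3) = 0 from Real.zero_rpow (by norm_num)] at this
  exact this.mono_left nhdsWithin_le_nhds

private lemma deriv_pow_neg23 (x : ℝ) (hx : x ≠ 0) :
    deriv (fun y : ℝ => y ^ (-(2:ℝ)/3)) x = (-(2:ℝ)/3) * x ^ ((-(2:ℝ)/3) - 1) :=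
  (Real.hasDerivAt_rpow_const (Or.inl hx)).deriv

/-- Under the kinematical conditions alone, two changes of completion need not
commute asymptotically: there are `ω, ω'` differentiable on `(0,1)` with
`x·ω → 0`, `x²·ω' → 0` (and likewise for `ω'`), yet
`x²·ω·ω'·(ω' − ω)` does not tend to `0` as `x → 0⁺`
(e.g. `ω = x^(−2/3)`, `ω' = 2·x^(−2/3)`). -/
theorem noncommutativity_example : ∃ ω ω' : ℝ → ℝ,
    (∀ x ∈ Set.Ioo (0:ℝ) 1, DifferentiableAt ℝ ω x) ∧
    (∀ x ∈ Set.Ioo (0:ℝ) 1, DifferentiableAt ℝ ω' x) ∧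
    Tendsto (fun x => x * ω x) (𝓝[>] (0:ℝ)) (𝓝 0) ∧
    Tendsto (fun x => x ^ 2 * deriv ω x) (𝓝[>] (0:ℝ)) (𝓝 0) ∧
    Tendsto (fun x => x * ω' x) (𝓝[>] (0:ℝ)) (𝓝 0) ∧
    Tendsto (fun x => x ^ 2 * deriv ω' x) (𝓝[>] (0:ℝ)) (𝓝 0) ∧
    ¬ Tendsto (fun x => x ^ 2 * ω x * ω' x * (ω' x - ω x)) (𝓝[>] (0:ℝ)) (𝓝 0) := by
  refine ⟨fun x => x ^ (-(2:ℝ)/3), fun x => 2 * x ^ (-(2:ℝ)/3), ?_, ?_, ?_, ?_, ?_, ?_, ?_⟩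
  · intro x hx
    exact (Real.hasDerivAt_rpow_const (Or.inl (ne_of_gt hx.1))).differentiableAt
  · intro x hx
    exact ((Real.hasDerivAt_rpow_const (Or.inl (ne_of_gt hx.1))).differentiableAt).const_mul 2
  · -- x * x^(-2/3) = x^(1/3)
    refine cube_root_tendsto.congr' ?_
    filter_upwards [self_mem_nhdsWithin] with x (hx : 0 < x)
    rw [show (1:ℝ)/3 = 1 + (-(2:ℝ)/3) by norm_num, Real.rpow_add hx, Real.rpow_one]
  · -- x^2 * deriv = (-2/3) * x^(1/3)
    have : Tendsto (fun x : ℝ => (-(2:ℝ)/3) * x ^ ((1:ℝ)/3)) (𝓝[>] (0:ℝ)) (𝓝 0) := by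
      simpa using cube_root_tendsto.const_mul (-(2:ℝ)/3)
    refine this.congr' ?_
    filter_upwards [self_mem_nhdsWithin] with x (hx : 0 < x)
    rw [deriv_pow_neg23 x (ne_of_gt hx), ← Real.rpow_natCast x 2, ← mul_assoc,
      mul_comm ((x:ℝ) ^ ((2:ℕ):ℝ)) (-(2:ℝ)/3), mul_assoc, ← Real.rpow_add hx]
    norm_num
  · have : Tendsto (fun x : ℝ => 2 * x ^ ((1:ℝ)/3)) (𝓝[>] (0:ℝ)) (𝓝 0) := by
      simpa using cube_root_tendsto.const_mul (2:ℝ)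
    refine this.congr' ?_
    filter_upwards [self_mem_nhdsWithin] with x (hx : 0 < x)
    rw [show (1:ℝ)/3 = 1 + (-(2:ℝ)/3) by norm_num, Real.rpow_add hx, Real.rpow_one]
    ring
  · have : Tendsto (fun x : ℝ => (-(4:ℝ)/3) * x ^ ((1:ℝ)/3)) (𝓝[>] (0:ℝ)) (𝓝 0) := by
      simpa using cube_root_tendsto.const_mul (-(4:ℝ)/3)
    refine this.congr' ?_
    filter_upwards [self_mem_nhdsWithin] with x (hx : 0 < x)
    have hd : deriv (fun y : ℝ => 2 * y ^ (-(2:ℝ)/3)) x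
        = 2 * ((-(2:ℝ)/3) * x ^ ((-(2:ℝ)/3) - 1)) := by
      rw [deriv_const_mul _ (Real.hasDerivAt_rpow_const (Or.inl (ne_of_gt hx))).differentiableAt,
        deriv_pow_neg23 x (ne_of_gt hx)]
    rw [hd, ← Real.rpow_natCast x 2]
    rw [show (2:ℝ) * ((-(2:ℝ)/3) * x ^ ((-(2:ℝ)/3) - 1)) = (-(4:ℝ)/3) * x ^ ((-(2:ℝ)/3) - 1) by ring,
      ← mul_assoc, mul_comm ((x:ℝ) ^ ((2:ℕ):ℝ)) (-(4:ℝ)/3), mul_assoc, ← Real.rpow_add hx]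
    norm_num
  · intro h
    have heq : (fun x : ℝ => x ^ 2 * x ^ (-(2:ℝ)/3) * (2 * x ^ (-(2:ℝ)/3)) *
        (2 * x ^ (-(2:ℝ)/3) - x ^ (-(2:ℝ)/3))) =ᶠ[𝓝[>] (0:ℝ)] (fun _ => (2:ℝ)) := by
      filter_upwards [self_mem_nhdsWithin] with x (hx : 0 < x)
      have ha : (x ^ (-(2:ℝ)/3)) ^ 3 = x ^ (-(2:ℝ)) := by
        rw [← Real.rpow_natCast (x ^ (-(2:ℝ)/3)) 3, ← Real.rpow_mul hx.le]
        norm_num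
      have key : x ^ 2 * (x ^ (-(2:ℝ)/3)) ^ 3 = 1 := by
        rw [ha, ← Real.rpow_natCast x 2, ← Real.rpow_add hx]
        norm_num
      linear_combination 2 * key
    have h2 : Tendsto (fun x : ℝ => x ^ 2 * x ^ (-(2:ℝ)/3) * (2 * x ^ (-(2:ℝ)/3)) *
        (2 * x ^ (-(2:ℝ)/3) - x ^ (-(2:ℝ)/3))) (𝓝[>] (0:ℝ)) (𝓝 2) :=
      tendsto_const_nhds.congr' heq.symm
    have : (0:ℝ) = 2 := tendsto_nhds_unique h h2
    norm_num at this
end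

section
/- There exist differentiable functions w₁, w₂ : (0, 1) → ℝ such that, as x → 0⁺, x·wᵢ(x) → 0 and x²·wᵢ'(x) → 0 for i = 1, 2, and yet x²·(w₁(x)·w₂'(x) − w₂(x)·w₁'(x)) does not tend to 0 as x → 0⁺. For example w₁(x) = x^{−1/2} and w₂(x) = x^{−1/2}·log x work, for which x²·(w₁·w₂' − w₂·w₁') is identically 1. -/
open Filter Topology Real

noncomputable def W1 : ℝ → ℝ := fun x => x ^ (-(1/2) : ℝ)
noncomputable def W2 : ℝ → ℝ := fun x => x ^ (-(1/2) : ℝ) * Real.log x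

lemma hd1 {x : ℝ} (hx : 0 < x) :
    HasDerivAt W1 (-(1/2) * x ^ ((-(1/2) : ℝ) - 1)) x :=
  Real.hasDerivAt_rpow_const (Or.inl hx.ne')

lemma hd2 {x : ℝ} (hx : 0 < x) :
    HasDerivAt W2 ((-(1/2) * x ^ ((-(1/2) : ℝ) - 1)) * Real.log x
      + x ^ (-(1/2) : ℝ) * x⁻¹) x :=
  (hd1 hx).mul (Real.hasDerivAt_log hx.ne')

lemma T0 : Tendsto (fun x : ℝ => x ^ ((1:ℝ)/2)) (𝓝[>] (0:ℝ)) (𝓝 0) := by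
  have h := (Real.continuousAt_rpow_const 0 ((1:ℝ)/2) (Or.inr (by norm_num))).tendsto
  rw [Real.zero_rpow (by norm_num)] at h
  exact h.mono_left nhdsWithin_le_nhds

lemma Tlog : Tendsto (fun x : ℝ => Real.log x * x ^ ((1:ℝ)/2)) (𝓝[>] (0:ℝ)) (𝓝 0) :=
  tendsto_log_mul_rpow_nhdsGT_zero (by norm_num)

lemma sq_eq (x : ℝ) : (x:ℝ) ^ 2 = x ^ ((2:ℝ)) := by
  rw [← Real.rpow_natCast x 2]; norm_num

lemma key1raw {x : ℝ} (hx : 0 < x) : x * x ^ (-(1/2):ℝ) = x ^ ((1:ℝ)/2) := by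
  rw [show x * x ^ (-(1/2):ℝ) = x ^ ((1:ℝ)) * x ^ (-(1/2):ℝ) by rw [Real.rpow_one],
    ← Real.rpow_add hx]
  norm_num

lemma key1 {x : ℝ} (hx : 0 < x) : x * W1 x = x ^ ((1:ℝ)/2) := key1raw hx

lemma key2 {x : ℝ} (hx : 0 < x) :
    x ^ 2 * deriv W1 x = -(1/2) * x ^ ((1:ℝ)/2) := by
  rw [(hd1 hx).deriv, sq_eq x, mul_comm (-(1/2):ℝ), ← mul_assoc, ← Real.rpow_add hx]
  norm_num
  ring

lemma key3 {x : ℝ} (hx : 0 < x) : x * W2 x = Real.log x * x ^ ((1:ℝ)/2) := by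
  unfold W2
  rw [← mul_assoc, key1raw hx, mul_comm]

lemma key4 {x : ℝ} (hx : 0 < x) :
    x ^ 2 * deriv W2 x = -(1/2) * (Real.log x * x ^ ((1:ℝ)/2)) + x ^ ((1:ℝ)/2) := by
  rw [(hd2 hx).deriv]
  have h1 : (x:ℝ) ^ 2 * x ^ ((-(1/2):ℝ) - 1) = x ^ ((1:ℝ)/2) := by
    rw [sq_eq x, ← Real.rpow_add hx]; norm_num
  have h2 : (x:ℝ) ^ 2 * (x ^ (-(1/2):ℝ) * x⁻¹) = x ^ ((1:ℝ)/2) := by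
    rw [show (x:ℝ)⁻¹ = x ^ ((-1:ℝ)) by rw [Real.rpow_neg_one],
      sq_eq x, ← Real.rpow_add hx, ← Real.rpow_add hx]
    norm_num
  calc x ^ 2 * ((-(1/2) * x ^ ((-(1/2):ℝ) - 1)) * Real.log x + x ^ (-(1/2):ℝ) * x⁻¹)
      = -(1/2) * (Real.log x * (x ^ 2 * x ^ ((-(1/2):ℝ) - 1))) + x ^ 2 * (x ^ (-(1/2):ℝ) * x⁻¹) := by ring
    _ = _ := by rw [h1, h2]

lemma key5 {x : ℝ} (hx : 0 < x) :
    x ^ 2 * (W1 x * deriv W2 x - W2 x * deriv W1 x) = 1 := by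
  rw [(hd1 hx).deriv, (hd2 hx).deriv]
  unfold W1 W2
  have hh : (x:ℝ) ^ (-(1/2):ℝ) * x ^ (-(1/2):ℝ) = x⁻¹ := by
    rw [← Real.rpow_add hx, show (-(1/2):ℝ) + -(1/2) = -1 by norm_num, Real.rpow_neg_one]
  calc x ^ 2 * (x ^ (-(1/2):ℝ) * ((-(1/2) * x ^ ((-(1/2):ℝ) - 1)) * Real.log x
          + x ^ (-(1/2):ℝ) * x⁻¹)
        - x ^ (-(1/2):ℝ) * Real.log x * (-(1/2) * x ^ ((-(1/2):ℝ) - 1)))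
      = x ^ 2 * ((x ^ (-(1/2):ℝ) * x ^ (-(1/2):ℝ)) * x⁻¹) := by ring
    _ = 1 := by rw [hh]; field_simp



/-- Under the weaker kinematical conditions alone, supertranslation generators
need not commute: there are `w₁, w₂` differentiable on `(0,1)` with
`x·wᵢ(x) → 0` and `x²·wᵢ'(x) → 0` as `x → 0⁺`, yet
`x²·(w₁·w₂' − w₂·w₁')` does not tend to `0` as `x → 0⁺`
(e.g. `w₁ = x^(−1/2)` and `w₂ = x^(−1/2)·log x`). -/
theorem supertranslation_noncommutativity_example : ∃ w₁ w₂ : ℝ → ℝ,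
    (∀ x ∈ Set.Ioo (0:ℝ) 1, DifferentiableAt ℝ w₁ x) ∧
    (∀ x ∈ Set.Ioo (0:ℝ) 1, DifferentiableAt ℝ w₂ x) ∧
    Tendsto (fun x => x * w₁ x) (𝓝[>] (0:ℝ)) (𝓝 0) ∧
    Tendsto (fun x => x ^ 2 * deriv w₁ x) (𝓝[>] (0:ℝ)) (𝓝 0) ∧
    Tendsto (fun x => x * w₂ x) (𝓝[>] (0:ℝ)) (𝓝 0) ∧
    Tendsto (fun x => x ^ 2 * deriv w₂ x) (𝓝[>] (0:ℝ)) (𝓝 0) ∧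
    ¬ Tendsto (fun x => x ^ 2 * (w₁ x * deriv w₂ x - w₂ x * deriv w₁ x))
        (𝓝[>] (0:ℝ)) (𝓝 0) := by
  refine ⟨W1, W2, ?_, ?_, ?_, ?_, ?_, ?_, ?_⟩
  · exact fun x hx => (hd1 hx.1).differentiableAt
  · exact fun x hx => (hd2 hx.1).differentiableAt
  · exact T0.congr' (by filter_upwards [self_mem_nhdsWithin] with x hx using (key1 hx).symm)
  · have h : Tendsto (fun x : ℝ => -(1/2) * x ^ ((1:ℝ)/2)) (𝓝[>] (0:ℝ)) (𝓝 0) := by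
      simpa using T0.const_mul (-(1/2) : ℝ)
    exact h.congr' (by filter_upwards [self_mem_nhdsWithin] with x hx using (key2 hx).symm)
  · exact Tlog.congr' (by filter_upwards [self_mem_nhdsWithin] with x hx using (key3 hx).symm)
  · have h : Tendsto (fun x : ℝ => -(1/2) * (Real.log x * x ^ ((1:ℝ)/2)) + x ^ ((1:ℝ)/2))
        (𝓝[>] (0:ℝ)) (𝓝 0) := by
      simpa using (Tlog.const_mul (-(1/2) : ℝ)).add T0
    exact h.congr' (by filter_upwards [self_mem_nhdsWithin] with x hx using (key4 hx).symm)
  · intro hcon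
    have h1 : Tendsto (fun _ : ℝ => (1:ℝ)) (𝓝[>] (0:ℝ)) (𝓝 0) :=
      hcon.congr' (by filter_upwards [self_mem_nhdsWithin] with x hx using key5 hx)
    have := tendsto_nhds_unique h1 tendsto_const_nhds
    norm_num at this
end
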